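/- For every r ≥ 3 and k ≥ 3, ssat_r(K_k) ≥ r²/4. -/
import Mathlib


/-- `S` is monochromatic of color `i` under the edge-coloring `c`. -/
def IsMonoOn {n r : ℕ} (c : Sym2 (Fin n) → Fin r) (i : Fin r) (S : Finset (Fin n)) : Prop :=
  ∀ x ∈ S, ∀ y ∈ S, x ≠ y → c s(x, y) = i

/-- `c'` extends the edge-coloring `c` by one new vertex. -/
def ColExtends {n r : ℕ} (c : Sym2 (Fin n) → Fin r) (c' : Sym2 (Fin (n + 1)) → Fin r) : Prop :=
  ∀ x y : Fin n, c' s(x.castSucc, y.castSucc) = c s(x, y)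

/-- An `r`-edge-coloring of `K_n` is `(r, K_k)`-semisaturated if every one-vertex extension
creates a new monochromatic `K_k` (one through the new vertex). -/
def Semisaturated (r k n : ℕ) (c : Sym2 (Fin n) → Fin r) : Prop :=
  ∀ c' : Sym2 (Fin (n + 1)) → Fin r, ColExtends c c' →
    ∃ i : Fin r, ∃ S : Finset (Fin (n + 1)), S.card = k ∧ Fin.last n ∈ S ∧ IsMonoOn c' i S

/-- The semisaturation Ramsey number `ssat_r(K_k)`. -/
noncomputable def ssat (r k : ℕ) : ℕ :=
  sInf {n | ∃ c : Sym2 (Fin n) → Fin r, Semisaturated r k n c}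


lemma lemB {n r : ℕ} (c : Sym2 (Fin n) → Fin r) (U : Finset (Fin n)) (C : Finset (Fin r))
    (hm : 5 ≤ C.card) (hU : C.card + 1 ≤ U.card) :
    ∃ i ∈ C, ∃ W ⊆ U, W.card = (C.card + 1) / 2 ∧
      ∀ x ∈ W, ∀ y ∈ W, x ≠ y → c s(x, y) ≠ i := by
  classical
  set m := C.card with hmdef
  set t := (m + 1) / 2 with htdef
  obtain ⟨U₀, hU₀U, hU₀card⟩ := Finset.exists_subset_card_eq hU
  obtain ⟨x₀, hx₀⟩ : U₀.Nonempty := Finset.card_pos.mp (by omega)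
  by_contra hcon
  push_neg at hcon
  set E : Fin r → Finset (Finset (Fin n)) := fun i =>
    (U₀.powersetCard 2).filter (fun P => ∀ x ∈ P, ∀ y ∈ P, x ≠ y → c s(x, y) = i) with hE
  have key : ∀ i ∈ C, m + 2 - t ≤ (E i).card := by
    intro i hi
    by_contra hsmall
    push_neg at hsmall
    set D : Finset (Fin n) := (E i).image (fun P => (P.min).getD x₀) with hD
    have hDcard : D.card ≤ (E i).card := Finset.card_image_le
    set W₀ : Finset (Fin n) := U₀ \ D with hW
    have hW₀ind : ∀ x ∈ W₀, ∀ y ∈ W₀, x ≠ y → c s(x, y) ≠ i := by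
      intro x hx y hy hxy hc
      have hxU : x ∈ U₀ := (Finset.mem_sdiff.mp hx).1
      have hyU : y ∈ U₀ := (Finset.mem_sdiff.mp hy).1
      have hP : ({x, y} : Finset (Fin n)) ∈ E i := by
        rw [hE, Finset.mem_filter, Finset.mem_powersetCard]
        refine ⟨⟨?_, ?_⟩, ?_⟩
        · intro z hz
          rcases Finset.mem_insert.mp hz with h | h
          · exact h ▸ hxU
          · exact (Finset.mem_singleton.mp h) ▸ hyU
        · rw [Finset.card_insert_of_notMem (by simpa using hxy), Finset.card_singleton]
        · intro a ha b hb hab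
          rcases Finset.mem_insert.mp ha with h | h <;>
            rcases Finset.mem_insert.mp hb with h' | h'
          · exact absurd (h.trans h'.symm) hab
          · subst h; rw [Finset.mem_singleton] at h'; subst h'; exact hc
          · rw [Finset.mem_singleton] at h; subst h; subst h'
            rw [Sym2.eq_swap]; exact hc
          · rw [Finset.mem_singleton] at h h'
            exact absurd (h.trans h'.symm) hab
      have hne : ({x, y} : Finset (Fin n)).Nonempty := ⟨x, by simp⟩
      obtain ⟨a, ha⟩ := Finset.min_of_nonempty hne
      have haP : a ∈ ({x, y} : Finset (Fin n)) := Finset.mem_of_min ha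
      have hmemD : a ∈ D := by
        rw [hD, Finset.mem_image]
        exact ⟨{x, y}, hP, by rw [ha]; rfl⟩
      rcases Finset.mem_insert.mp haP with h | h
      · exact (Finset.mem_sdiff.mp hx).2 (h ▸ hmemD)
      · exact (Finset.mem_sdiff.mp hy).2 ((Finset.mem_singleton.mp h) ▸ hmemD)
    have hWlow : U₀.card - D.card ≤ W₀.card := Finset.le_card_sdiff D U₀
    have hW₀card : t ≤ W₀.card := by omega
    obtain ⟨W, hWsub, hWcard⟩ := Finset.exists_subset_card_eq hW₀card
    obtain ⟨x, hx, y, hy, hxy, hceq⟩ :=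
      hcon i hi W ((hWsub.trans Finset.sdiff_subset).trans hU₀U) hWcard
    exact hW₀ind x (hWsub hx) y (hWsub hy) hxy hceq
  have hdisj : ∀ i ∈ C, ∀ j ∈ C, i ≠ j → Disjoint (E i) (E j) := by
    intro i _ j _ hij
    rw [Finset.disjoint_left]
    intro P hPi hPj
    rw [hE, Finset.mem_filter, Finset.mem_powersetCard] at hPi hPj
    obtain ⟨x, y, hxy, hPxy⟩ := Finset.card_eq_two.mp hPi.1.2
    have h1 := hPi.2 x (by simp [hPxy]) y (by simp [hPxy]) hxy
    have h2 := hPj.2 x (by simp [hPxy]) y (by simp [hPxy]) hxy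
    exact hij (h1.symm.trans h2)
  have hsum : (C.biUnion E).card = ∑ i ∈ C, (E i).card := Finset.card_biUnion hdisj
  have hsub : C.biUnion E ⊆ U₀.powersetCard 2 := by
    intro P hP
    obtain ⟨i, _, hPi⟩ := Finset.mem_biUnion.mp hP
    exact (Finset.mem_filter.mp hPi).1
  have htot : ∑ i ∈ C, (E i).card ≤ (m + 1).choose 2 := by
    rw [← hsum]
    calc (C.biUnion E).card ≤ (U₀.powersetCard 2).card := Finset.card_le_card hsub
    _ = (m + 1).choose 2 := by rw [Finset.card_powersetCard, hU₀card]
  have hlow : m * (m + 2 - t) ≤ ∑ i ∈ C, (E i).card := by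
    calc m * (m + 2 - t) = ∑ _i ∈ C, (m + 2 - t) := by rw [Finset.sum_const, smul_eq_mul]
    _ ≤ ∑ i ∈ C, (E i).card := Finset.sum_le_sum key
  have h2c : 2 * ((m + 1).choose 2) = (m + 1) * m := by
    rw [Nat.choose_two_right]
    simp only [Nat.add_sub_cancel]
    rw [Nat.mul_div_cancel' (by simpa [mul_comm] using (Nat.even_mul_succ_self m).two_dvd)]
  have hq : m + 3 ≤ 2 * (m + 2 - t) := by omega
  have hfin : m * (m + 3) ≤ (m + 1) * m := by
    calc m * (m + 3) = m * (m + 3) := rfl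
    _ ≤ m * (2 * (m + 2 - t)) := Nat.mul_le_mul_left _ hq
    _ = 2 * (m * (m + 2 - t)) := by ring
    _ ≤ 2 * ((m + 1).choose 2) := by
        have := le_trans hlow htot
        omega
    _ = (m + 1) * m := h2c
  nlinarith [hm]

lemma goodf {n r : ℕ} (hr : 0 < r) (c : Sym2 (Fin n) → Fin r) :
    ∀ m : ℕ, ∀ (U : Finset (Fin n)) (C : Finset (Fin r)), C.card = m →
    (U.card ≤ m ∨ 4 * U.card < m * m) →
    ∃ f : Fin n → Fin r, (∀ x ∈ U, f x ∈ C) ∧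
      ∀ x y : Fin n, x ∈ U → y ∈ U → x ≠ y → f x = f y → c s(x, y) ≠ f x := by
  intro m
  induction m using Nat.strong_induction_on with
  | _ m IH =>
    intro U C hC hcase
    classical
    by_cases hinj : U.card ≤ C.card
    · -- injective assignment
      have hcard : Fintype.card {x // x ∈ U} ≤ Fintype.card {i // i ∈ C} := by
        simpa [Fintype.card_coe] using hinj
      obtain ⟨emb⟩ := Function.Embedding.nonempty_of_card_le hcard
      refine ⟨fun x => if h : x ∈ U then (emb ⟨x, h⟩ : {i // i ∈ C}).1 else ⟨0, hr⟩, ?_, ?_⟩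
      · intro x hx; simp only [dif_pos hx]; exact (emb ⟨x, hx⟩).2
      · intro x y hx hy hxy hfeq
        exfalso
        simp only [dif_pos hx, dif_pos hy] at hfeq
        exact hxy (congrArg Subtype.val (emb.injective (Subtype.ext hfeq)))
    · push_neg at hinj
      have h4 : 4 * U.card < m * m := by
        rcases hcase with h | h
        · omega
        · exact h
      have hm5 : 5 ≤ m := by
        by_contra hlt
        push_neg at hlt
        have h1 : C.card + 1 ≤ U.card := hinj
        nlinarith
      obtain ⟨i, hi, W, hWU, hWcard, hWind⟩ := lemB c U C (hC ▸ hm5) (by omega)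
      obtain ⟨t, ht⟩ : ∃ t, t = (m + 1) / 2 := ⟨_, rfl⟩
      have hWt : W.card = t := by rw [hWcard, hC, ht]
      set U' := U \ W with hU'
      set C' := C.erase i with hC'
      have hC'card : C'.card = m - 1 := by rw [hC', Finset.card_erase_of_mem hi, hC]
      have hU'card : U'.card = U.card - t := by rw [hU', Finset.card_sdiff_of_subset hWU, hWt]
      have hrec : U'.card ≤ m - 1 ∨ 4 * U'.card < (m - 1) * (m - 1) := by
        by_cases hsm : U'.card ≤ m - 1
        · exact Or.inl hsm
        · right
          rw [hU'card]
          obtain ⟨m', rfl⟩ : ∃ m', m = m' + 1 := ⟨m - 1, by omega⟩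
          have h2t : m' + 1 ≤ 2 * t := by omega
          have hmm : (m' + 1) * (m' + 1) = m' * m' + 2 * m' + 1 := by ring
          simp only [Nat.add_sub_cancel]
          have hN : t ≤ U.card := hWt ▸ Finset.card_le_card hWU
          omega
      obtain ⟨f', hf'mem, hf'good⟩ := IH (m - 1) (by omega) U' C' hC'card hrec
      refine ⟨fun x => if x ∈ W then i else f' x, ?_, ?_⟩
      · intro x hx
        by_cases hxW : x ∈ W
        · simpa [hxW] using hi
        · have : x ∈ U' := Finset.mem_sdiff.mpr ⟨hx, hxW⟩
          simpa [hxW] using Finset.erase_subset _ _ (hf'mem x this)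
      · intro x y hx hy hxy hfeq hcol
        by_cases hxW : x ∈ W <;> by_cases hyW : y ∈ W
        · simp only [if_pos hxW, if_pos hyW] at hfeq hcol
          exact hWind x hxW y hyW hxy hcol
        · have hy' : y ∈ U' := Finset.mem_sdiff.mpr ⟨hy, hyW⟩
          simp only [if_pos hxW, if_neg hyW] at hfeq
          exact (Finset.ne_of_mem_erase (hf'mem y hy')) hfeq.symm
        · have hx' : x ∈ U' := Finset.mem_sdiff.mpr ⟨hx, hxW⟩
          simp only [if_neg hxW, if_pos hyW] at hfeq
          exact (Finset.ne_of_mem_erase (hf'mem x hx')) hfeq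
        · have hx' : x ∈ U' := Finset.mem_sdiff.mpr ⟨hx, hxW⟩
          have hy' : y ∈ U' := Finset.mem_sdiff.mpr ⟨hy, hyW⟩
          simp only [if_neg hxW, if_neg hyW] at hfeq hcol
          exact hf'good x y hx' hy' hxy hfeq hcol

lemma lower_bound {r k n : ℕ} (hr : 3 ≤ r) (hk : 3 ≤ k) (c : Sym2 (Fin n) → Fin r)
    (hc : Semisaturated r k n c) : r * r ≤ 4 * n := by
  by_contra hlt
  push_neg at hlt
  have hr0 : 0 < r := by omega
  obtain ⟨f, -, hfgood⟩ := goodf hr0 c r Finset.univ Finset.univ (by simp) (by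
    right
    simpa [Fintype.card_fin] using hlt)
  -- build the extension
  have hsymm : ∀ a b : Fin (n + 1),
      (fun a b : Fin (n + 1) =>
        if ha : (a : ℕ) < n then
          (if hb : (b : ℕ) < n then c s(⟨a, ha⟩, ⟨b, hb⟩) else f ⟨a, ha⟩)
        else (if hb : (b : ℕ) < n then f ⟨b, hb⟩ else ⟨0, hr0⟩)) a b =
      (fun a b : Fin (n + 1) =>
        if ha : (a : ℕ) < n then
          (if hb : (b : ℕ) < n then c s(⟨a, ha⟩, ⟨b, hb⟩) else f ⟨a, ha⟩)
        else (if hb : (b : ℕ) < n then f ⟨b, hb⟩ else ⟨0, hr0⟩)) b a := by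
    intro a b
    by_cases ha : (a : ℕ) < n <;> by_cases hb : (b : ℕ) < n <;>
      simp only [dif_pos, dif_neg, ha, hb, dite_true, dite_false]
    rw [Sym2.eq_swap]
  set c' : Sym2 (Fin (n + 1)) → Fin r := Sym2.lift ⟨_, hsymm⟩ with hc'
  have hext : ColExtends c c' := by
    intro x y
    rw [hc', Sym2.lift_mk]
    have hx : ((x.castSucc : Fin (n + 1)) : ℕ) < n := by simp [x.isLt]
    have hy : ((y.castSucc : Fin (n + 1)) : ℕ) < n := by simp [y.isLt]
    simp only [dif_pos hx, dif_pos hy]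
    congr 1 <;> exact Fin.ext (by simp)
  obtain ⟨i, S, hScard, hSlast, hSmono⟩ := hc c' hext
  -- extract two vertices besides last
  have herase : 2 ≤ (S.erase (Fin.last n)).card := by
    rw [Finset.card_erase_of_mem hSlast, hScard]; omega
  obtain ⟨x, hx, y, hy, hxy⟩ := Finset.one_lt_card.mp (by omega : 1 < (S.erase (Fin.last n)).card)
  have hxS : x ∈ S := Finset.mem_of_mem_erase hx
  have hyS : y ∈ S := Finset.mem_of_mem_erase hy
  have hxlast : x ≠ Fin.last n := Finset.ne_of_mem_erase hx
  have hylast : y ≠ Fin.last n := Finset.ne_of_mem_erase hy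
  have hxn : (x : ℕ) < n := by
    have := x.isLt
    have : (x : ℕ) ≠ n := fun h => hxlast (Fin.ext (by simp [h]))
    omega
  have hyn : (y : ℕ) < n := by
    have := y.isLt
    have : (y : ℕ) ≠ n := fun h => hylast (Fin.ext (by simp [h]))
    omega
  set x' : Fin n := ⟨x, hxn⟩
  set y' : Fin n := ⟨y, hyn⟩
  have hlastn : ¬ ((Fin.last n : Fin (n + 1)) : ℕ) < n := by simp
  have hfx : f x' = i := by
    have := hSmono (Fin.last n) hSlast x hxS (Ne.symm hxlast)
    rw [hc', Sym2.lift_mk] at this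
    simpa only [dif_neg hlastn, dif_pos hxn] using this
  have hfy : f y' = i := by
    have := hSmono (Fin.last n) hSlast y hyS (Ne.symm hylast)
    rw [hc', Sym2.lift_mk] at this
    simpa only [dif_neg hlastn, dif_pos hyn] using this
  have hcxy : c s(x', y') = i := by
    have := hSmono x hxS y hyS hxy
    rw [hc', Sym2.lift_mk] at this
    simpa only [dif_pos hxn, dif_pos hyn] using this
  have hx'y' : x' ≠ y' := by
    intro h
    apply hxy
    rw [Fin.ext_iff] at h ⊢
    exact h
  exact hfgood x' y' (Finset.mem_univ _) (Finset.mem_univ _) hx'y' (hfx.trans hfy.symm)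
    (by rw [hcxy, hfx])

lemma exists_semisat (r k : ℕ) (hr : 3 ≤ r) (hk : 3 ≤ k) :
    ∃ n : ℕ, ∃ c : Sym2 (Fin n) → Fin r, Semisaturated r k n c := by
  classical
  have hr0 : 0 < r := by omega
  obtain ⟨p, hple, hp⟩ := Nat.exists_infinite_primes (r * (k - 1))
  haveI : Fact p.Prime := ⟨hp⟩
  haveI : NeZero p := ⟨hp.pos.ne'⟩
  have hcard : Fintype.card (ZMod p × ZMod p) = p * p := by
    rw [Fintype.card_prod, ZMod.card]
  set e : Fin (p * p) ≃ ZMod p × ZMod p := (Fintype.equivFinOfCardEq hcard).symm with he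
  -- the coloring
  have hsym : ∀ a b : Fin (p * p),
      (fun a b : Fin (p * p) =>
        if h : ((((e b).2 - (e a).2) * ((e b).1 - (e a).1)⁻¹ : ZMod p)).val < r then
          (⟨_, h⟩ : Fin r) else ⟨0, hr0⟩) a b =
      (fun a b : Fin (p * p) =>
        if h : ((((e b).2 - (e a).2) * ((e b).1 - (e a).1)⁻¹ : ZMod p)).val < r then
          (⟨_, h⟩ : Fin r) else ⟨0, hr0⟩) b a := by
    intro a b
    have hslope : (((e b).2 - (e a).2) * ((e b).1 - (e a).1)⁻¹ : ZMod p) =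
        (((e a).2 - (e b).2) * ((e a).1 - (e b).1)⁻¹ : ZMod p) := by
      rw [show ((e a).2 - (e b).2 : ZMod p) = -((e b).2 - (e a).2) by ring,
        show ((e a).1 - (e b).1 : ZMod p) = -((e b).1 - (e a).1) by ring,
        inv_neg, neg_mul_neg]
    simp only [hslope]
  set c : Sym2 (Fin (p * p)) → Fin r := Sym2.lift ⟨_, hsym⟩ with hcdef
  refine ⟨p * p, c, ?_⟩
  intro c' hext
  set f : Fin (p * p) → Fin r := fun x => c' s(Fin.last _, x.castSucc) with hf
  set Φ : Fin (p * p) → Fin r × ZMod p :=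
    fun x => (f x, (e x).2 - (((f x : ℕ) : ZMod p)) * (e x).1) with hΦ
  have hpig : ∃ y ∈ (Finset.univ : Finset (Fin r × ZMod p)), (k - 2) <
      (Finset.univ.filter (fun x => Φ x = y)).card := by
    apply Finset.exists_lt_card_fiber_of_mul_lt_card_of_maps_to
      (fun a _ => Finset.mem_univ _)
    rw [Finset.card_univ, Finset.card_univ, Fintype.card_fin, Fintype.card_prod, ZMod.card,
      Fintype.card_fin]
    have h1 : r * (k - 2) < p := by
      have : r * (k - 2) + r ≤ r * (k - 1) := by
        have : r * (k - 2) + r = r * (k - 2 + 1) := by ring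
        rw [this]
        exact Nat.mul_le_mul_left r (by omega)
      omega
    calc r * p * (k - 2) = p * (r * (k - 2)) := by ring
    _ < p * p := by exact Nat.mul_lt_mul_of_le_of_lt (le_refl p) h1 hp.pos
  obtain ⟨⟨i, τ⟩, -, hbig⟩ := hpig
  have hT : k - 1 ≤ (Finset.univ.filter (fun x => Φ x = (i, τ))).card := by omega
  obtain ⟨T, hTsub, hTcard⟩ := Finset.exists_subset_card_eq hT
  have hTfact : ∀ x ∈ T, f x = i ∧ (e x).2 - (((i : ℕ) : ZMod p)) * (e x).1 = τ := by
    intro x hx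
    have := (Finset.mem_filter.mp (hTsub hx)).2
    rw [hΦ] at this
    have h1 : f x = i := congrArg Prod.fst this
    refine ⟨h1, ?_⟩
    have h2 := congrArg Prod.snd this
    simpa [h1] using h2
  refine ⟨i, insert (Fin.last _) (T.image Fin.castSucc), ?_, Finset.mem_insert_self _ _, ?_⟩
  · rw [Finset.card_insert_of_notMem, Finset.card_image_of_injective _ (Fin.castSucc_injective _),
      hTcard]
    · omega
    · rw [Finset.mem_image]
      rintro ⟨x, -, hx⟩
      exact absurd (congrArg Fin.val hx) (by simpa using x.isLt.ne)
  · intro a ha b hb hab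
    rcases Finset.mem_insert.mp ha with ha' | ha' <;> rcases Finset.mem_insert.mp hb with hb' | hb'
    · exact absurd (ha'.trans hb'.symm) hab
    · obtain ⟨y, hyT, rfl⟩ := Finset.mem_image.mp hb'
      subst ha'
      exact (hTfact y hyT).1
    · obtain ⟨x, hxT, rfl⟩ := Finset.mem_image.mp ha'
      subst hb'
      rw [Sym2.eq_swap]
      exact (hTfact x hxT).1
    · obtain ⟨x, hxT, rfl⟩ := Finset.mem_image.mp ha'
      obtain ⟨y, hyT, rfl⟩ := Finset.mem_image.mp hb'
      have hxy : x ≠ y := fun h => hab (by rw [h])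
      rw [hext x y, hcdef, Sym2.lift_mk]
      have hexy : e x ≠ e y := fun h => hxy (e.injective h)
      set i' : ZMod p := ((i : ℕ) : ZMod p) with hi'
      have hx2 : (e x).2 = i' * (e x).1 + τ := by
        have := (hTfact x hxT).2
        linear_combination this
      have hy2 : (e y).2 = i' * (e y).1 + τ := by
        have := (hTfact y hyT).2
        linear_combination this
      have hd : (e y).1 - (e x).1 ≠ 0 := by
        intro h
        have h1 : (e y).1 = (e x).1 := by linear_combination h
        apply hexy
        apply Prod.ext h1.symm
        rw [hx2, hy2, h1]
      have hslope : (((e y).2 - (e x).2) * ((e y).1 - (e x).1)⁻¹ : ZMod p) = i' := by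
        rw [hx2, hy2]
        field_simp
        ring
      have hival : (i' : ZMod p).val = (i : ℕ) := ZMod.val_cast_of_lt (by
        have : (i : ℕ) < r := i.isLt
        have hrp : r ≤ p := by
          calc r = r * 1 := by ring
          _ ≤ r * (k - 1) := Nat.mul_le_mul_left r (by omega)
          _ ≤ p := hple
        omega)
      simp only [hslope]
      rw [dif_pos (show i'.val < r by omega)]
      exact Fin.ext (by simpa using hival)

theorem stmt9 (r k : ℕ) (hr : 3 ≤ r) (hk : 3 ≤ k) :
    (r : ℝ) ^ 2 / 4 ≤ (ssat r k : ℝ) := by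
  have hne : {n | ∃ c : Sym2 (Fin n) → Fin r, Semisaturated r k n c}.Nonempty := by
    obtain ⟨n, c, h⟩ := exists_semisat r k hr hk
    exact ⟨n, c, h⟩
  have hmem : ssat r k ∈ {n | ∃ c : Sym2 (Fin n) → Fin r, Semisaturated r k n c} := by
    rw [ssat]
    exact Nat.sInf_mem hne
  obtain ⟨c, hc⟩ := hmem
  have hbound : r * r ≤ 4 * ssat r k := lower_bound hr hk c hc
  have hcast : (r : ℝ) * r ≤ 4 * (ssat r k : ℝ) := by exact_mod_cast hbound
  nlinarith [hcast]
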